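/- arXiv:2006.09732 — 5 statements merged into one kernel-verified Lean document; each statement's English description precedes it below -/
import Mathlib

section
/- Let d* ≥ 1 be an integer, 0 < δ < 1/d*, and suppose 1 < α ≤ min{α₁, α₂} where α₁ = sqrt((1 - 2δ/d* + δ²)/(1 - (1/d*)²)) and α₂ = (1/2)((1/d* - δ) + sqrt((1/d* - δ)² + 4)). Let C = (1/d* - δ)·α/(α² - 1) and f(t) = t² - (2/d*)t + 1. Then f(αC + δ) ≤ C². -/
/-- The key stability inequality: with `C = (1/d* - δ)·α/(α² - 1)` and
`f(t) = t² - (2/d*)t + 1`, if `1 < α ≤ min{α₁, α₂}` (with the convention `α₁ = ∞`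
when `d* = 1`) then `f(αC + δ) ≤ C²`. -/
theorem stmt_5 (dstar : ℕ) (hd : 1 ≤ dstar) (δ α : ℝ)
    (hδ0 : 0 < δ) (hδ1 : δ < 1 / (dstar : ℝ))
    (hα1 : 1 < α)
    (hαle1 : 1 < dstar → α ≤
      Real.sqrt ((1 - 2 * δ / (dstar : ℝ) + δ ^ 2) / (1 - (1 / (dstar : ℝ)) ^ 2)))
    (hαle2 : α ≤ (1 / 2) * ((1 / (dstar : ℝ) - δ) +
      Real.sqrt ((1 / (dstar : ℝ) - δ) ^ 2 + 4))) :
    (α * ((1 / (dstar : ℝ) - δ) * (α / (α ^ 2 - 1))) + δ) ^ 2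
      - (2 / (dstar : ℝ)) * (α * ((1 / (dstar : ℝ) - δ) * (α / (α ^ 2 - 1))) + δ) + 1
      ≤ ((1 / (dstar : ℝ) - δ) * (α / (α ^ 2 - 1))) ^ 2 := by
  set d : ℝ := (dstar : ℝ) with hdd
  have hd1 : (1 : ℝ) ≤ d := by rw [hdd]; exact_mod_cast hd
  have hd0 : (0 : ℝ) < d := lt_of_lt_of_le one_pos hd1
  set D : ℝ := 1 / d with hD
  have hD0 : 0 < D := by positivity
  have hD1 : D ≤ 1 := by rw [hD]; rw [div_le_one hd0]; exact hd1
  have hs : (0 : ℝ) < α ^ 2 - 1 := by nlinarith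
  -- key inequality : (D - δ)^2 ≥ (1 - D^2) * (α^2 - 1)
  have key : (1 - D ^ 2) * (α ^ 2 - 1) ≤ (D - δ) ^ 2 := by
    rcases eq_or_lt_of_le hd with h1 | h1
    · have hdone : d = 1 := by rw [hdd, ← h1]; norm_num
      have hDone : D = 1 := by rw [hD, hdone]; norm_num
      rw [hDone]; nlinarith [sq_nonneg (1 - δ)]
    · have h1' : 1 < dstar := h1
      have hdgt : (1 : ℝ) < d := by rw [hdd]; exact_mod_cast h1'
      have hDlt : D < 1 := by rw [hD]; rw [div_lt_one hd0]; exact hdgt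
      have hden : (0 : ℝ) < 1 - D ^ 2 := by nlinarith
      have hnum : (0 : ℝ) ≤ 1 - 2 * δ / d + δ ^ 2 := by
        have : 2 * δ / d = 2 * δ * D := by rw [hD]; ring
        rw [this]
        nlinarith [sq_nonneg (1 - δ), mul_pos hδ0 (sub_pos.mpr hDlt)]
      have hX : (0 : ℝ) ≤ (1 - 2 * δ / d + δ ^ 2) / (1 - (1 / d) ^ 2) := by
        apply div_nonneg hnum
        rw [← hD]; linarith
      have hle := hαle1 h1'
      have hX' : (0 : ℝ) ≤ (1 - 2 * δ / d + δ ^ 2) / (1 - D ^ 2) := by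
        rw [hD]; exact hX
      have hsq : α ^ 2 ≤ (1 - 2 * δ / d + δ ^ 2) / (1 - D ^ 2) := by
        have := Real.sq_sqrt hX'
        nlinarith [Real.sqrt_nonneg ((1 - 2 * δ / d + δ ^ 2) / (1 - D ^ 2))]
      have hsq' : α ^ 2 * (1 - D ^ 2) ≤ 1 - 2 * δ / d + δ ^ 2 := by
        rwa [le_div_iff₀ hden] at hsq
      have h2δ : 2 * δ / d = 2 * δ * D := by rw [hD]; ring
      rw [h2δ] at hsq'
      nlinarith
  have hu : 0 < D - δ := by rw [hD]; linarith
  have hsne : α ^ 2 - 1 ≠ 0 := ne_of_gt hs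
  have h2d : 2 / d = 2 * D := by rw [hD]; ring
  rw [h2d]
  have expand : (α * ((D - δ) * (α / (α ^ 2 - 1))) + δ) ^ 2
      - 2 * D * (α * ((D - δ) * (α / (α ^ 2 - 1))) + δ) + 1
      - ((D - δ) * (α / (α ^ 2 - 1))) ^ 2
      = ((1 - D ^ 2) * (α ^ 2 - 1) - (D - δ) ^ 2) / (α ^ 2 - 1) := by
    field_simp
    ring
  have hnum : (1 - D ^ 2) * (α ^ 2 - 1) - (D - δ) ^ 2 ≤ 0 := by linarith
  have hquot : ((1 - D ^ 2) * (α ^ 2 - 1) - (D - δ) ^ 2) / (α ^ 2 - 1) ≤ 0 :=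
    div_nonpos_of_nonpos_of_nonneg hnum hs.le
  linarith
end

section
/- Stability of fusion frame Sigma-Delta: Let {W_n}_{n=1}^N be subspaces of ℝ^d with d* = max_n dim(W_n), and suppose each quantizer Q_n: W_n → A_n satisfies ⟨Q_n(w), w⟩ ≥ ‖w‖/d* for all w ∈ W_n, and ‖Q_n(w)‖ = 1. Let 0 < δ < 1/d*, α = sup_n Σ_{j=1}^L ‖H_{n,j}‖ satisfy 1 < α ≤ min{α₁, α₂} (as defined via d*, δ), and C = (1/d* - δ)·α/(α² - 1). If the iteration v_n = y_n - Q_n(z_n) + Σ_{j=1}^L H_{n,j}(v_{n-j}) with z_n = y_n + Σ_{j=1}^L H_{n,j}(v_{n-j}) is initialized with v_0 = ... = v_{1-L} = 0, and ‖y_n‖ ≤ δ for all n, then ‖v_n‖ ≤ C for all 1 ≤ n ≤ N. -/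
open scoped RealInnerProductSpace

set_option maxHeartbeats 2000000 in
/-- Stability of the fusion frame Sigma-Delta algorithm (Theorem 4.1): if the quantizers
satisfy `⟨Qₙ(w), w⟩ ≥ ‖w‖/d*` and `‖Qₙ(w)‖ = 1` on `Wₙ`, the feedback operators satisfy
`Σⱼ ‖H_{n,j}‖ ≤ α` with `1 < α ≤ min{α₁, α₂}`, and the inputs satisfy `‖yₙ‖ ≤ δ`, then
the state variables of the iteration remain bounded by `C = (1/d* - δ)·α/(α² - 1)`. -/
theorem stmt_7 (d N L dstar : ℕ) (hdstar : 1 ≤ dstar) (hL : 1 ≤ L)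
    (W : ℤ → Submodule ℝ (EuclideanSpace ℝ (Fin d)))
    (hdim : ∀ n, Module.finrank ℝ (W n) ≤ dstar)
    (Q : ℤ → EuclideanSpace ℝ (Fin d) → EuclideanSpace ℝ (Fin d))
    (hQ_norm : ∀ n, ∀ w ∈ W n, ‖Q n w‖ = 1)
    (hQ_inner : ∀ n, ∀ w ∈ W n, ‖w‖ / (dstar : ℝ) ≤ ⟪Q n w, w⟫)
    (H : ℤ → ℕ → EuclideanSpace ℝ (Fin d) →L[ℝ] EuclideanSpace ℝ (Fin d))
    (hH_mem : ∀ n j x, H n j x ∈ W n)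
    (δ α : ℝ) (hδ0 : 0 < δ) (hδ1 : δ < 1 / (dstar : ℝ))
    (hα_lb : 1 < α)
    (hα_bound : ∀ n : ℤ, ∑ j ∈ Finset.Icc 1 L, ‖H n j‖ ≤ α)
    (hα1 : 1 < dstar → α ≤
      Real.sqrt ((1 - 2 * δ / (dstar : ℝ) + δ ^ 2) / (1 - (1 / (dstar : ℝ)) ^ 2)))
    (hα2 : α ≤ (1 / 2) * ((1 / (dstar : ℝ) - δ) +
      Real.sqrt ((1 / (dstar : ℝ) - δ) ^ 2 + 4)))
    (y v : ℤ → EuclideanSpace ℝ (Fin d))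
    (hy_mem : ∀ n, y n ∈ W n)
    (hy_norm : ∀ n, ‖y n‖ ≤ δ)
    (hv_init : ∀ n : ℤ, n ≤ 0 → v n = 0)
    (hv_iter : ∀ n : ℤ, 1 ≤ n →
      v n = y n - Q n (y n + ∑ j ∈ Finset.Icc 1 L, H n j (v (n - j)))
        + ∑ j ∈ Finset.Icc 1 L, H n j (v (n - j))) :
    ∀ n : ℤ, 1 ≤ n → n ≤ N →
      ‖v n‖ ≤ (1 / (dstar : ℝ) - δ) * (α / (α ^ 2 - 1)) := by
  set β : ℝ := 1 / (dstar : ℝ) with hβ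
  set c : ℝ := β - δ with hcdef
  set C : ℝ := c * (α / (α ^ 2 - 1)) with hCdef
  clear_value β c C
  have hd1 : (1 : ℝ) ≤ (dstar : ℝ) := by exact_mod_cast hdstar
  have hβpos : 0 < β := by rw [hβ]; positivity
  have hβle1 : β ≤ 1 := by rw [hβ, div_le_one (by linarith)]; linarith
  have hc : 0 < c := by rw [hcdef]; linarith
  have hcle1 : c ≤ 1 := by rw [hcdef]; linarith
  have hα2pos : 0 < α ^ 2 - 1 := by nlinarith
  have hα2' : α ^ 2 - 1 ≤ c * α := by
    have hs := Real.sq_sqrt (show (0:ℝ) ≤ c ^ 2 + 4 by positivity)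
    have h2 : 2 * α - c ≤ Real.sqrt (c ^ 2 + 4) := by linarith [hα2]
    have h3 : (0:ℝ) ≤ 2 * α - c := by linarith
    nlinarith [mul_self_le_mul_self h3 h2]
  have hCeq : C * (α ^ 2 - 1) = c * α := by
    rw [hCdef]; field_simp
  have hC1 : 1 ≤ C := by
    rw [hCdef, ← mul_div_assoc, le_div_iff₀ hα2pos]
    linarith
  have hC0 : 0 ≤ C := by linarith
  -- Key quadratic inequality from hα1
  have hK : (1 - 2 * δ * β + δ ^ 2) * (α ^ 2 - 1) ≤ c ^ 2 * α ^ 2 := by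
    rcases eq_or_lt_of_le hdstar with h1 | h1
    · have hds1 : (dstar : ℝ) = 1 := by exact_mod_cast h1.symm
      have hβ1 : β = 1 := by rw [hβ, hds1]; norm_num
      have hceq : c = 1 - δ := by rw [hcdef, hβ1]
      rw [hceq, hβ1]
      nlinarith [sq_nonneg (1 - δ), hα2pos]
    · have hα1' := hα1 h1
      have hd2 : (2 : ℝ) ≤ (dstar : ℝ) := by exact_mod_cast h1
      have hβhalf : β ≤ 1 / 2 := by
        rw [hβ, div_le_div_iff₀ (by linarith) (by norm_num)]; linarith
      have hden : 0 < 1 - β ^ 2 := by nlinarith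
      have hrw : 2 * δ / (dstar:ℝ) = 2 * δ * β := by rw [hβ]; ring
      have hKnum : 0 ≤ 1 - 2 * δ * β + δ ^ 2 := by
        nlinarith [sq_nonneg (1 - δ * β), sq_nonneg δ]
      rw [hrw] at hα1'
      have hs := Real.sq_sqrt (show (0:ℝ) ≤ (1 - 2 * δ * β + δ ^ 2) / (1 - β ^ 2) from
        div_nonneg hKnum hden.le)
      have hαsq : α ^ 2 ≤ (1 - 2 * δ * β + δ ^ 2) / (1 - β ^ 2) := by
        linarith [mul_self_le_mul_self (by linarith : (0:ℝ) ≤ α) hα1', hs]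
      rw [le_div_iff₀ hden] at hαsq
      have hc2 : c ^ 2 * α ^ 2 = (β ^ 2 - 2 * δ * β + δ ^ 2) * α ^ 2 := by
        rw [hcdef]; ring
      linarith [hαsq, hc2]
  -- f(T) ≤ C² where T = δ + α C
  have hprod : (c * α * C) * (α ^ 2 - 1) = c ^ 2 * α ^ 2 := by
    calc (c * α * C) * (α ^ 2 - 1) = c * α * (C * (α ^ 2 - 1)) := by ring
    _ = c * α * (c * α) := by rw [hCeq]
    _ = c ^ 2 * α ^ 2 := by ring
  have hCαC : 1 - 2 * δ * β + δ ^ 2 ≤ c * α * C := by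
    have h2 : (1 - 2 * δ * β + δ ^ 2) * (α ^ 2 - 1) ≤ (c * α * C) * (α ^ 2 - 1) := by
      rw [hprod]; exact hK
    exact le_of_mul_le_mul_right h2 hα2pos
  have hfT : (δ + α * C) ^ 2 - 2 * β * (δ + α * C) + 1 ≤ C ^ 2 := by
    have h2 : C ^ 2 * (α ^ 2 - 1) - C * (c * α) = 0 := by
      calc C ^ 2 * (α ^ 2 - 1) - C * (c * α) = C * (C * (α ^ 2 - 1)) - C * (c * α) := by ring
      _ = C * (c * α) - C * (c * α) := by rw [hCeq]
      _ = 0 := by ring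
    have expand : (δ + α * C) ^ 2 - 2 * β * (δ + α * C) + 1 - C ^ 2
        = (1 - 2 * δ * β + δ ^ 2) - c * α * C + (C ^ 2 * (α ^ 2 - 1) - C * (c * α)) := by
      rw [hcdef]; ring
    linarith [hCαC, expand, h2]
  have hTpos : 0 < δ + α * C := by nlinarith [hC1, hα_lb]
  -- Key step lemma
  have key : ∀ n : ℤ, 1 ≤ n → (∀ m : ℤ, m < n → ‖v m‖ ≤ C) → ‖v n‖ ≤ C := by
    intro n hn ih
    set z : EuclideanSpace ℝ (Fin d) := y n + ∑ j ∈ Finset.Icc 1 L, H n j (v (n - j)) with hz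
    have hz_mem : z ∈ W n := by
      apply Submodule.add_mem _ (hy_mem n)
      exact Submodule.sum_mem _ (fun j _ => hH_mem n j _)
    have hvn : v n = z - Q n z := by
      rw [hv_iter n hn, hz]; abel
    have hzbound : ‖z‖ ≤ δ + α * C := by
      calc ‖z‖ ≤ ‖y n‖ + ‖∑ j ∈ Finset.Icc 1 L, H n j (v (n - j))‖ := norm_add_le _ _
      _ ≤ δ + ∑ j ∈ Finset.Icc 1 L, ‖H n j (v (n - j))‖ :=
          add_le_add (hy_norm n) (norm_sum_le _ _)
      _ ≤ δ + ∑ j ∈ Finset.Icc 1 L, ‖H n j‖ * C := by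
          gcongr with j hj
          calc ‖H n j (v (n - j))‖ ≤ ‖H n j‖ * ‖v (n - j)‖ := (H n j).le_opNorm _
          _ ≤ ‖H n j‖ * C := by
              apply mul_le_mul_of_nonneg_left _ (norm_nonneg _)
              rcases le_or_gt (n - (j:ℤ)) 0 with h | h
              · rw [hv_init _ h]; simpa using hC0
              · apply ih
                simp only [Finset.mem_Icc] at hj
                omega
      _ ≤ δ + α * C := by
          have h := mul_le_mul_of_nonneg_right (hα_bound n) hC0
          rw [Finset.sum_mul] at h
          linarith
    have hQn : ‖Q n z‖ = 1 := hQ_norm n z hz_mem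
    have hQi : ‖z‖ / (dstar : ℝ) ≤ ⟪Q n z, z⟫ := hQ_inner n z hz_mem
    have hsq : ‖v n‖ ^ 2 ≤ ‖z‖ ^ 2 - 2 * β * ‖z‖ + 1 := by
      rw [hvn, @norm_sub_sq_real, hQn, real_inner_comm]
      have hd0 : (dstar : ℝ) ≠ 0 := by linarith
      have hrw : ‖z‖ / (dstar : ℝ) = β * ‖z‖ := by rw [hβ]; field_simp
      rw [hrw] at hQi
      nlinarith [hQi]
    have hquad : ‖z‖ ^ 2 - 2 * β * ‖z‖ + 1 ≤ C ^ 2 := by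
      have ht0 : 0 ≤ ‖z‖ := norm_nonneg _
      have hC2 : 1 ≤ C ^ 2 := by nlinarith
      nlinarith [mul_nonneg ht0 (sub_nonneg.2 hzbound), hfT, hTpos,
        mul_nonneg (mul_nonneg hTpos.le ht0) (sub_nonneg.2 hzbound)]
    nlinarith [norm_nonneg (v n), le_trans hsq hquad]
  -- Strong induction
  have main : ∀ k : ℕ, ∀ m : ℤ, 1 ≤ m → m ≤ (k : ℤ) → ‖v m‖ ≤ C := by
    intro k
    induction k with
    | zero => intro m h1 h0; omega
    | succ k ih =>
      intro m h1 hk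
      apply key m h1
      intro p hp
      rcases le_or_gt p 0 with h | h
      · rw [hv_init p h]; simpa using hC0
      · exact ih p h (by omega)
  intro n h1 _
  exact main n.toNat n h1 (by omega)
end

section
/- Let r, σ ∈ ℕ, n_j = σ(j-1)² + 1 for 1 ≤ j ≤ r, and d_j = Π_{i≠j, 1≤i≤r} n_i/(n_i - n_j). Define h ∈ ℓ¹(ℕ) by h = Σ_{j=1}^r d_j δ_{n_j}. Then for all n ≥ n_r - r + 1, C(r+n-1, r-1) = Σ_{l=1}^n C(r+n-1-l, r-1) h_l, i.e., C(r+n-1, r-1) = Σ_{j: n_j ≤ n} d_j C(r+n-n_j-1, r-1). -/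
open Finset Polynomial Nat

private lemma prod_aux (a : ℕ) : ∀ b : ℕ,
    ∏ k ∈ Finset.Icc 1 b, (a + k) = (a + b).descFactorial b
  | 0 => by simp
  | (b + 1) => by
    rw [Finset.prod_Icc_succ_top (by omega), prod_aux a b, ← Nat.add_assoc,
      Nat.succ_descFactorial_succ, Nat.mul_comm]

private lemma key (r n m : ℕ) (hr : 1 ≤ r) (hm : m ≤ n + r - 1) :
    ((r + n - 1 - m).choose (r - 1) : ℝ) * (r - 1)! =
      ∏ k ∈ Finset.Icc 1 (r - 1), ((n : ℝ) + k - m) := by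
  rcases le_or_gt m n with hmn | hmn
  · have h1 : r + n - 1 - m = (n - m) + (r - 1) := by omega
    have h2 : ∀ k ∈ Finset.Icc 1 (r - 1), ((n : ℝ) + k - m) = ((n - m + k : ℕ) : ℝ) := by
      intro k _
      have : ((n - m : ℕ) : ℝ) = (n : ℝ) - m := by
        push_cast [Nat.cast_sub hmn]; ring
      push_cast [this]; ring
    rw [Finset.prod_congr rfl h2, ← Nat.cast_prod, prod_aux, h1]
    norm_cast
    rw [Nat.descFactorial_eq_factorial_mul_choose]
    ring
  · have hr2 : 2 ≤ r := by omega
    have hz : (r + n - 1 - m).choose (r - 1) = 0 :=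
      Nat.choose_eq_zero_of_lt (by omega)
    rw [hz]
    have hk : (m - n) ∈ Finset.Icc 1 (r - 1) := by
      simp only [Finset.mem_Icc]; omega
    rw [Finset.prod_eq_zero hk]
    · simp
    · have : ((m - n : ℕ) : ℝ) = (m : ℝ) - n := by
        push_cast [Nat.cast_sub hmn.le]; ring
      rw [this]; ring

/-- Lemma 6.2 (from Güntürk's construction): with `n_j = σ(j-1)² + 1`,
`d_j = Π_{i≠j} n_i/(n_i - n_j)`, and `h = Σ_j d_j δ_{n_j}`, one has for all
`n ≥ n_r - r + 1` the identity `C(r+n-1, r-1) = Σ_{l=1}^n C(r+n-1-l, r-1)·h_l`. -/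
theorem stmt_10 (r σ : ℕ) (hr : 1 ≤ r) (hσ : 1 ≤ σ)
    (nn : ℕ → ℕ) (hnn : ∀ j, nn j = σ * (j - 1) ^ 2 + 1)
    (dd : ℕ → ℝ)
    (hdd : ∀ j, dd j = ∏ i ∈ (Finset.Icc 1 r).erase j, (nn i : ℝ) / ((nn i : ℝ) - (nn j : ℝ)))
    (h : ℕ → ℝ)
    (hh : ∀ l, h l = ∑ j ∈ Finset.Icc 1 r, if l = nn j then dd j else 0) :
    ∀ n : ℕ, nn r - r + 1 ≤ n →
      (Nat.choose (r + n - 1) (r - 1) : ℝ) =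
        ∑ l ∈ Finset.Icc 1 n, (Nat.choose (r + n - 1 - l) (r - 1) : ℝ) * h l := by
  intro n hn
  -- basic bounds
  have hnnr_ge : r ≤ nn r := by
    obtain ⟨t, rfl⟩ : ∃ t, r = t + 1 := ⟨r - 1, by omega⟩
    rw [hnn]
    simp only [Nat.add_sub_cancel]
    have h1 : t ≤ t ^ 2 := Nat.le_self_pow two_ne_zero t
    have h2 : t ^ 2 ≤ σ * t ^ 2 := Nat.le_mul_of_pos_left _ hσ
    omega
  have hnnr : nn r ≤ n + r - 1 := by omega
  have hmono : ∀ j ∈ Finset.Icc 1 r, nn j ≤ nn r := by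
    intro j hj
    simp only [Finset.mem_Icc] at hj
    rw [hnn, hnn]
    have : (j - 1) ^ 2 ≤ (r - 1) ^ 2 := Nat.pow_le_pow_left (by omega) 2
    exact Nat.add_le_add_right (Nat.mul_le_mul_left σ this) 1
  have hinj : ∀ i ∈ Finset.Icc 1 r, ∀ j ∈ Finset.Icc 1 r, nn i = nn j → i = j := by
    intro i hi j hj hij
    simp only [Finset.mem_Icc] at hi hj
    rw [hnn, hnn] at hij
    have h0 : σ * (i - 1) ^ 2 = σ * (j - 1) ^ 2 := by omega
    have h2 : (i - 1) ^ 2 = (j - 1) ^ 2 :=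
      Nat.eq_of_mul_eq_mul_left (by omega) h0
    have h3 : i - 1 = j - 1 := Nat.pow_left_injective (by norm_num) h2
    omega
  set v : ℕ → ℝ := fun j => (nn j : ℝ) with hv
  have hvinj : Set.InjOn v (Finset.Icc 1 r) := by
    intro i hi j hj hij
    exact hinj i (by simpa using hi) j (by simpa using hj) (Nat.cast_injective hij)
  -- the polynomial
  set f : ℝ[X] := Polynomial.C (((r - 1)! : ℝ))⁻¹ *
      ∏ k ∈ Finset.Icc 1 (r - 1), (Polynomial.C ((n : ℝ) + k) - Polynomial.X) with hf
  have hfac : ((r - 1)! : ℝ) ≠ 0 := Nat.cast_ne_zero.mpr (Nat.factorial_ne_zero _)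
  have heval : ∀ m : ℕ, m ≤ n + r - 1 →
      f.eval (m : ℝ) = ((r + n - 1 - m).choose (r - 1) : ℝ) := by
    intro m hm
    rw [hf]
    simp only [eval_mul, eval_C, eval_prod, eval_sub, eval_X]
    rw [← key r n m hr hm]
    field_simp
  -- degree bound
  have hdeg : f.degree < (Finset.Icc 1 r).card := by
    have h1 : f.natDegree ≤ r - 1 := by
      refine le_trans (natDegree_mul_le) ?_
      simp only [natDegree_C, Nat.zero_add]
      refine le_trans (natDegree_prod_le _ _) ?_
      calc ∑ k ∈ Finset.Icc 1 (r - 1), (Polynomial.C ((n : ℝ) + k) - Polynomial.X).natDegree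
          ≤ ∑ _k ∈ Finset.Icc 1 (r - 1), 1 := by
            refine Finset.sum_le_sum fun k _ => ?_
            have : Polynomial.C ((n : ℝ) + k) - Polynomial.X = -(X - C ((n : ℝ) + k)) := by ring
            rw [this, natDegree_neg, natDegree_X_sub_C]
        _ = r - 1 := by simp
    have h2 : f.degree ≤ ((r - 1 : ℕ) : WithBot ℕ) :=
      le_trans degree_le_natDegree (by exact_mod_cast h1)
    refine lt_of_le_of_lt h2 ?_
    rw [Nat.card_Icc]
    exact_mod_cast (by omega : r - 1 < r + 1 - 1)
  -- Lagrange interpolation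
  have hL := Lagrange.eq_interpolate (s := Finset.Icc 1 r) (v := v) hvinj hdeg
  have hL0 := congrArg (Polynomial.eval 0) hL
  rw [Lagrange.interpolate_apply, eval_finset_sum] at hL0
  simp only [eval_mul, eval_C] at hL0
  -- basis evaluation at 0
  have hb : ∀ j ∈ Finset.Icc 1 r, (Lagrange.basis (Finset.Icc 1 r) v j).eval 0 = dd j := by
    intro j hj
    rw [hdd, Lagrange.basis, eval_prod]
    refine Finset.prod_congr rfl fun i hi => ?_
    have hij : i ≠ j := (Finset.mem_erase.mp hi).1
    have hi' : i ∈ Finset.Icc 1 r := (Finset.mem_erase.mp hi).2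
    have hne : (nn i : ℝ) - (nn j : ℝ) ≠ 0 := by
      rw [sub_ne_zero]
      exact fun hc => hij (hinj i hi' j hj (Nat.cast_injective hc))
    rw [Lagrange.basisDivisor]
    simp only [eval_mul, eval_C, eval_sub, eval_X]
    rw [hv]
    have hBA : (nn j : ℝ) - nn i = -((nn i : ℝ) - nn j) := by ring
    rw [hBA, zero_sub, inv_neg, div_eq_mul_inv]
    ring
  -- key evaluations
  have hf0 : f.eval 0 = ((r + n - 1).choose (r - 1) : ℝ) := by
    have := heval 0 (by omega)
    simpa using this
  have hfj : ∀ j ∈ Finset.Icc 1 r,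
      f.eval (v j) = ((r + n - 1 - nn j).choose (r - 1) : ℝ) := fun j hj =>
    heval (nn j) (le_trans (hmono j hj) hnnr)
  -- identity from Lagrange
  have hmain : ((r + n - 1).choose (r - 1) : ℝ) =
      ∑ j ∈ Finset.Icc 1 r, ((r + n - 1 - nn j).choose (r - 1) : ℝ) * dd j := by
    rw [← hf0, hL0]
    exact Finset.sum_congr rfl fun j hj => by rw [hfj j hj, hb j hj]
  -- transform the RHS of the goal
  have hRHS : ∑ l ∈ Finset.Icc 1 n, ((r + n - 1 - l).choose (r - 1) : ℝ) * h l =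
      ∑ j ∈ Finset.Icc 1 r, ((r + n - 1 - nn j).choose (r - 1) : ℝ) * dd j := by
    simp only [hh, Finset.mul_sum]
    rw [Finset.sum_comm]
    refine Finset.sum_congr rfl fun j hj => ?_
    have hjm : j ∈ Finset.Icc 1 r := hj
    have : ∀ l ∈ Finset.Icc 1 n,
        ((r + n - 1 - l).choose (r - 1) : ℝ) * (if l = nn j then dd j else 0) =
        if l = nn j then ((r + n - 1 - l).choose (r - 1) : ℝ) * dd j else 0 := by
      intro l _; split <;> simp
    rw [Finset.sum_congr rfl this, Finset.sum_ite_eq' (Finset.Icc 1 n) (nn j)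
      (fun l => ((r + n - 1 - l).choose (r - 1) : ℝ) * dd j)]
    by_cases hcase : nn j ∈ Finset.Icc 1 n
    · simp [hcase]
    · rw [if_neg hcase]
      have h1 : 1 ≤ nn j := by rw [hnn]; omega
      have h2 : n < nn j := by
        simp only [Finset.mem_Icc] at hcase; omega
      have h3 : nn j ≤ n + r - 1 := le_trans (hmono j hjm) hnnr
      have hz : (r + n - 1 - nn j).choose (r - 1) = 0 :=
        Nat.choose_eq_zero_of_lt (by omega)
      rw [hz]
      simp
  rw [hRHS, ← hmain]
end

section
/- With n_j = σ(j-1)² + 1 and d_j = Π_{i≠j} n_i/(n_i - n_j) for 1 ≤ j ≤ r, the sequence h = Σ_{j=1}^r d_j δ_{n_j} satisfies ‖h‖_{ℓ¹} = Σ_{j=1}^r |d_j| < cosh(π σ^{-1/2}). -/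
/-!
Write `u = σ^(-1/2)` and index the nodes by `b = j - 1 ∈ {0, …, m}`, so that
`n_a / (n_a - n_b) = (a² + u²) / (a² - b²)`. With `P = ∏_{k=1}^m (1 + u²/k²)`,
`|d_b| = u² P / (b² + u²) · (m!)² / ∏_{a ≠ b} |a² - b²|`, and the last product is `(m!)²` for
`b = 0` and `(m - b)! (m + b)! / 2 ≥ (m!)² / 2` for `b ≥ 1`. Hence
`Σ |d_b| ≤ P (1 + Σ_{k=1}^m 2u² / (k² + u²))`. Evaluating Euler's product for `sin` and the
partial fraction expansion of `cot` at `i u` gives `P < sinh (π u) / (π u)` and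
`1 + Σ_k 2u² / (k² + u²) ≤ π u coth (π u)`, whose product is `cosh (π u)`.
-/

open Finset Filter Real Topology
open scoped Nat

lemma ofReal_mul_I_mem_integerComplement {u : ℝ} (hu : u ≠ 0) :
    (u * Complex.I : ℂ) ∈ Complex.integerComplement := by
  simpa [Complex.mem_integerComplement_iff, Complex.ext_iff] using hu.symm

lemma tendsto_prod_one_add_sq_div_sq {u : ℝ} (hu : u ≠ 0) :
    Tendsto (fun n ↦ ∏ j ∈ range n, (1 + u ^ 2 / (j + 1) ^ 2)) atTop
      (𝓝 (sinh (π * u) / (π * u))) := by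
  rw [Complex.isUniformEmbedding_ofReal.isEmbedding.tendsto_nhds_iff]
  convert tendsto_euler_sin_prod' (x := u * Complex.I) (by simpa using hu) using 1
  · ext n
    simp only [Function.comp_apply, sineTerm, mul_pow, Complex.I_sq]
    push_cast
    ring_nf
  · rw [show (π : ℂ) * (u * Complex.I) = (π * u : ℝ) * Complex.I by push_cast; ring,
      Complex.sin_mul_I]
    push_cast
    field_simp

lemma prod_one_add_sq_div_sq_lt {u : ℝ} (hu : u ≠ 0) (m : ℕ) :
    ∏ j ∈ range m, (1 + u ^ 2 / (j + 1) ^ 2) < sinh (π * u) / (π * u) := by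
  have hpos (n : ℕ) : 0 < ∏ j ∈ range n, (1 + u ^ 2 / (j + 1) ^ 2) :=
    prod_pos fun j _ ↦ by positivity
  have hmono : Monotone fun n ↦ ∏ j ∈ range n, (1 + u ^ 2 / (j + 1) ^ 2) :=
    monotone_nat_of_le_succ fun n ↦ by
      rw [prod_range_succ]
      exact le_mul_of_one_le_right (hpos n).le (le_add_of_nonneg_right (by positivity))
  calc _ < ∏ j ∈ range (m + 1), (1 + u ^ 2 / (j + 1) ^ 2) := by
        rw [prod_range_succ]
        exact lt_mul_of_one_lt_right (hpos m) (lt_add_of_pos_right _ (by positivity))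
    _ ≤ _ := hmono.ge_of_tendsto (tendsto_prod_one_add_sq_div_sq hu) (m + 1)

lemma cotTerm_ofReal_mul_I (u : ℝ) (j : ℕ) :
    cotTerm (u * Complex.I) j * Complex.I = ((2 * u / ((j + 1) ^ 2 + u ^ 2) : ℝ) : ℂ) := by
  have h1 : u * Complex.I - (j + 1) ≠ 0 := ne_of_apply_ne Complex.re (by simp; linarith)
  have h2 : u * Complex.I + (j + 1) ≠ 0 := ne_of_apply_ne Complex.re (by simp; positivity)
  have h3 : ((j : ℂ) + 1) ^ 2 + u ^ 2 ≠ 0 := by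
    exact_mod_cast (by positivity : ((j : ℝ) + 1) ^ 2 + u ^ 2 ≠ 0)
  simp only [cotTerm]
  push_cast
  field_simp
  linear_combination (2 * u * ((j : ℂ) + 1) ^ 2) * Complex.I_sq

lemma hasSum_two_mul_div_sq_add_sq {u : ℝ} (hu : 0 < u) :
    HasSum (fun j : ℕ ↦ 2 * u / ((j + 1) ^ 2 + u ^ 2))
      (π * cosh (π * u) / sinh (π * u) - 1 / u) := by
  rw [hasSum_iff_tendsto_nat_of_nonneg (fun j ↦ by positivity),
    Complex.isUniformEmbedding_ofReal.isEmbedding.tendsto_nhds_iff]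
  convert (tendsto_logDeriv_euler_cot_sub
    (ofReal_mul_I_mem_integerComplement hu.ne')).mul_const Complex.I using 1
  · ext n
    simp only [Function.comp_apply, Complex.ofReal_sum, sum_mul, cotTerm_ofReal_mul_I]
  · rw [show (π : ℂ) * (u * Complex.I) = (π * u : ℝ) * Complex.I by push_cast; ring,
      Complex.cot_eq_cos_div_sin, Complex.sin_mul_I, Complex.cos_mul_I]
    have : sinh (π * u) ≠ 0 := by simp [hu.ne', pi_ne_zero]
    push_cast
    field_simp

lemma one_add_sum_le_mul_cosh_div_sinh {u : ℝ} (hu : 0 < u) (m : ℕ) :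
    1 + ∑ j ∈ range m, 2 * u ^ 2 / ((j + 1) ^ 2 + u ^ 2) ≤
      π * u * cosh (π * u) / sinh (π * u) := by
  have h := sum_le_hasSum (range m) (fun j _ ↦ by positivity) (hasSum_two_mul_div_sq_add_sq hu)
  calc 1 + ∑ j ∈ range m, 2 * u ^ 2 / ((j + 1) ^ 2 + u ^ 2)
      = 1 + u * ∑ j ∈ range m, 2 * u / ((j + 1) ^ 2 + u ^ 2) := by
        rw [mul_sum]; congr 1; exact sum_congr rfl fun j _ ↦ by ring
    _ ≤ 1 + u * (π * cosh (π * u) / sinh (π * u) - 1 / u) := by gcongr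
    _ = π * u * cosh (π * u) / sinh (π * u) := by field_simp; ring

lemma prod_mul_one_add_sum_lt_cosh {u : ℝ} (hu : 0 < u) (m : ℕ) :
    (∏ j ∈ range m, (1 + u ^ 2 / (j + 1) ^ 2)) *
      (1 + ∑ j ∈ range m, 2 * u ^ 2 / ((j + 1) ^ 2 + u ^ 2)) < cosh (π * u) := by
  have hsinh : 0 < sinh (π * u) := sinh_pos_iff.2 (by positivity)
  calc _ < sinh (π * u) / (π * u) * (π * u * cosh (π * u) / sinh (π * u)) :=
        mul_lt_mul (prod_one_add_sq_div_sq_lt hu.ne' m) (one_add_sum_le_mul_cosh_div_sinh hu m)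
          (by positivity) (by positivity)
    _ = cosh (π * u) := by field_simp

lemma two_mul_prod_range_sq_sub_sq {b : ℕ} (hb : 0 < b) :
    2 * ∏ a ∈ range b, (b ^ 2 - a ^ 2) = (2 * b)! := by
  have hsplit : ∏ a ∈ range b, (b ^ 2 - a ^ 2) = b.ascFactorial b * b.descFactorial b := by
    rw [Nat.ascFactorial_eq_prod_range, Nat.descFactorial_eq_prod_range, ← prod_mul_distrib]
    exact prod_congr rfl fun a _ ↦ Nat.sq_sub_sq b a
  obtain ⟨c, rfl⟩ : ∃ c, b = c + 1 := ⟨b - 1, by omega⟩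
  rw [hsplit, Nat.descFactorial_self, show 2 * (c + 1) = c + (c + 1) + 1 by ring,
    Nat.factorial_succ (c + (c + 1)), ← Nat.factorial_mul_ascFactorial c (c + 1),
    Nat.factorial_succ c]
  ring

lemma two_mul_prod_erase_abs_sq_sub_sq {b m : ℕ} (hb : 0 < b) (hbm : b ≤ m) :
    2 * ∏ a ∈ (range (m + 1)).erase b, |(a : ℝ) ^ 2 - b ^ 2| = (m - b)! * (m + b)! := by
  induction m, hbm using Nat.le_induction with
  | base =>
    rw [range_add_one, erase_insert (by simp), Nat.sub_self, ← two_mul,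
      ← two_mul_prod_range_sq_sub_sq hb]
    push_cast
    rw [Nat.factorial_zero, Nat.cast_one, one_mul]
    refine congrArg _ (prod_congr rfl fun a ha ↦ ?_)
    have : a ≤ b := (mem_range.1 ha).le
    rw [abs_sub_comm, abs_of_nonneg (sub_nonneg.2 (by gcongr)), Nat.cast_sub (by gcongr)]
    push_cast
    rfl
  | succ m hbm ih =>
    rw [range_add_one, erase_insert_of_ne (by omega), prod_insert (by simp), mul_left_comm, ih,
      show m + 1 - b = m - b + 1 by omega, add_right_comm, Nat.factorial_succ, Nat.factorial_succ,
      abs_of_nonneg (sub_nonneg.2 (by gcongr; omega))]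
    push_cast [hbm]
    ring

lemma factorial_mul_factorial_le {b m : ℕ} (hbm : b ≤ m) : m ! * m ! ≤ (m - b)! * (m + b)! := by
  calc m ! * m ! = (m - b)! * m.descFactorial b * m ! := by
        rw [Nat.factorial_mul_descFactorial hbm]
    _ ≤ (m - b)! * (m + b).descFactorial b * m ! := by gcongr; omega
    _ = (m - b)! * (m + b)! := by
      rw [mul_assoc, mul_comm _ m !, ← Nat.factorial_mul_descFactorial (Nat.le_add_left b m),
        Nat.add_sub_cancel]

lemma sq_factorial_le_two_mul_prod_erase {b m : ℕ} (hb : 0 < b) (hbm : b ≤ m) :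
    (m ! : ℝ) ^ 2 ≤ 2 * ∏ a ∈ (range (m + 1)).erase b, |(a : ℝ) ^ 2 - b ^ 2| := by
  rw [two_mul_prod_erase_abs_sq_sub_sq hb hbm, sq]
  exact_mod_cast factorial_mul_factorial_le hbm

lemma prod_erase_zero_abs_sq_sub_sq (m : ℕ) :
    ∏ a ∈ (range (m + 1)).erase 0, |(a : ℝ) ^ 2 - (0 : ℕ) ^ 2| = (m ! : ℝ) ^ 2 := by
  rw [range_add_one', erase_insert (by simp), prod_map, ← prod_range_add_one_eq_factorial,
    Nat.cast_prod, ← prod_pow]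
  refine prod_congr rfl fun j _ ↦ ?_
  show |((j + 1 : ℕ) : ℝ) ^ 2 - (0 : ℕ) ^ 2| = _
  rw [Nat.cast_zero, zero_pow two_ne_zero, sub_zero, abs_of_nonneg (sq_nonneg _)]

lemma prod_sq_add_sq (u : ℝ) (m : ℕ) :
    ∏ j ∈ range m, (((j : ℝ) + 1) ^ 2 + u ^ 2) =
      (m ! : ℝ) ^ 2 * ∏ j ∈ range m, (1 + u ^ 2 / (j + 1) ^ 2) := by
  rw [← prod_range_add_one_eq_factorial, Nat.cast_prod, ← prod_pow, ← prod_mul_distrib]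
  refine prod_congr rfl fun j _ ↦ ?_
  push_cast
  field_simp

lemma prod_erase_div_abs_sq_sub_sq {u : ℝ} (hu : u ≠ 0) {b m : ℕ} (hbm : b ≤ m) :
    ∏ a ∈ (range (m + 1)).erase b, ((a : ℝ) ^ 2 + u ^ 2) / |(a : ℝ) ^ 2 - b ^ 2| =
      u ^ 2 / (b ^ 2 + u ^ 2) * (∏ j ∈ range m, (1 + u ^ 2 / ((j : ℝ) + 1) ^ 2)) *
        ((m ! : ℝ) ^ 2 / ∏ a ∈ (range (m + 1)).erase b, |(a : ℝ) ^ 2 - b ^ 2|) := by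
  have hnum : (∏ a ∈ (range (m + 1)).erase b, ((a : ℝ) ^ 2 + u ^ 2)) * (b ^ 2 + u ^ 2) =
      u ^ 2 * ((m ! : ℝ) ^ 2 * ∏ j ∈ range m, (1 + u ^ 2 / ((j : ℝ) + 1) ^ 2)) := by
    rw [prod_erase_mul _ (fun a : ℕ ↦ (a : ℝ) ^ 2 + u ^ 2) (mem_range_succ_iff.2 hbm),
      prod_range_succ']
    push_cast
    rw [prod_sq_add_sq]
    ring
  have hb : (b : ℝ) ^ 2 + u ^ 2 ≠ 0 := by positivity
  rw [prod_div_distrib, eq_div_of_mul_eq hb hnum]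
  ring

lemma sum_prod_erase_div_abs_sq_sub_sq_lt_cosh {u : ℝ} (hu : 0 < u) (m : ℕ) :
    ∑ b ∈ range (m + 1), ∏ a ∈ (range (m + 1)).erase b,
      ((a : ℝ) ^ 2 + u ^ 2) / |(a : ℝ) ^ 2 - b ^ 2| < cosh (π * u) := by
  set P := ∏ j ∈ range m, (1 + u ^ 2 / ((j : ℝ) + 1) ^ 2)
  have hP : 0 < P := prod_pos fun j _ ↦ by positivity
  have hterm_zero : ∏ a ∈ (range (m + 1)).erase 0,
      ((a : ℝ) ^ 2 + u ^ 2) / |(a : ℝ) ^ 2 - (0 : ℕ) ^ 2| = P := by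
    rw [prod_erase_div_abs_sq_sub_sq hu.ne' (Nat.zero_le m), prod_erase_zero_abs_sq_sub_sq,
      div_self (by positivity)]
    simp [hu.ne', P]
  have hterm_succ (j : ℕ) (hj : j ∈ range m) : ∏ a ∈ (range (m + 1)).erase (j + 1),
      ((a : ℝ) ^ 2 + u ^ 2) / |(a : ℝ) ^ 2 - (j + 1 : ℕ) ^ 2| ≤
        2 * u ^ 2 / ((j + 1) ^ 2 + u ^ 2) * P := by
    have hjm : j + 1 ≤ m := mem_range.1 hj
    have hQ := sq_factorial_le_two_mul_prod_erase j.succ_pos hjm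
    have hQpos : 0 < ∏ a ∈ (range (m + 1)).erase (j + 1), |(a : ℝ) ^ 2 - (j + 1 : ℕ) ^ 2| := by
      have : (0 : ℝ) < (m ! : ℝ) ^ 2 := by positivity
      linarith
    rw [prod_erase_div_abs_sq_sub_sq hu.ne' hjm]
    calc _ ≤ u ^ 2 / ((j + 1 : ℕ) ^ 2 + u ^ 2) * P * 2 := by
          gcongr
          rw [div_le_iff₀ hQpos]
          linarith
      _ = _ := by push_cast; ring
  rw [sum_range_succ', hterm_zero]
  calc _ ≤ ∑ j ∈ range m, 2 * u ^ 2 / ((j + 1) ^ 2 + u ^ 2) * P + P := by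
        gcongr with j hj
        exact hterm_succ j hj
    _ = P * (1 + ∑ j ∈ range m, 2 * u ^ 2 / ((j + 1) ^ 2 + u ^ 2)) := by
        rw [← sum_mul]; ring
    _ < cosh (π * u) := prod_mul_one_add_sum_lt_cosh hu m

lemma Icc_one_eq_map_range (n : ℕ) : Icc 1 n = (range n).map (addRightEmbedding 1) := by
  rw [range_eq_Ico, map_add_right_Ico, zero_add, Ico_add_one_right_eq_Icc]

lemma abs_div_sub_eq_add_inv_div {c x : ℝ} (hc : 0 < c) (hx : 0 ≤ x) (y : ℝ) :
    |(c * x + 1) / ((c * x + 1) - (c * y + 1))| = (x + c⁻¹) / |x - y| := by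
  rw [abs_div, abs_of_pos (by positivity), show c * x + 1 - (c * y + 1) = c * (x - y) by ring,
    abs_mul, abs_of_pos hc, ← div_div]
  congr 1
  field_simp

/-- The `ℓ¹` bound on the filter `h`: `Σ_{j=1}^r |d_j| < cosh(π σ^{-1/2})`. -/
theorem stmt_11 (r σ : ℕ) (hr : 1 ≤ r) (hσ : 1 ≤ σ)
    (nn : ℕ → ℕ) (hnn : ∀ j, nn j = σ * (j - 1) ^ 2 + 1)
    (dd : ℕ → ℝ)
    (hdd : ∀ j, dd j = ∏ i ∈ (Finset.Icc 1 r).erase j, (nn i : ℝ) / ((nn i : ℝ) - (nn j : ℝ))) :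
    ∑ j ∈ Finset.Icc 1 r, |dd j| < Real.cosh (Real.pi * (σ : ℝ) ^ (-(1 / 2 : ℝ))) := by
  obtain ⟨m, rfl⟩ : ∃ m, r = m + 1 := ⟨r - 1, by omega⟩
  have hσ0 : (0 : ℝ) < σ := by exact_mod_cast hσ
  have hu : 0 < (σ : ℝ) ^ (-(1 / 2 : ℝ)) := rpow_pos_of_pos hσ0 _
  have hu2 : ((σ : ℝ) ^ (-(1 / 2 : ℝ))) ^ 2 = (σ : ℝ)⁻¹ := by
    rw [← rpow_natCast, ← rpow_mul hσ0.le]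
    norm_num [rpow_neg_one]
  have hnn_succ (a : ℕ) : (nn (a + 1) : ℝ) = σ * (a : ℝ) ^ 2 + 1 := by
    rw [hnn, Nat.add_sub_cancel]; push_cast; ring
  convert sum_prod_erase_div_abs_sq_sub_sq_lt_cosh hu m using 1
  rw [Icc_one_eq_map_range, sum_map]
  refine sum_congr rfl fun b _ ↦ ?_
  have hset : (Icc 1 (m + 1)).erase (b + 1) =
      ((range (m + 1)).erase b).map (addRightEmbedding 1) := by
    rw [Icc_one_eq_map_range, map_erase]; rfl
  rw [addRightEmbedding_apply, hdd, hset, prod_map, abs_prod]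
  refine prod_congr rfl fun a _ ↦ ?_
  rw [addRightEmbedding_apply, hnn_succ, hnn_succ, hu2,
    abs_div_sub_eq_add_inv_div hσ0 (by positivity)]
end

section
/- Let G_N = D_N^{-r}(I_N - H_N), where H_N is the block operator with blocks (H_N)_{n,k} = h_{n-k} P_{W_n}···P_{W_{k+1}} for 1 ≤ n-k ≤ L and 0 otherwise, with h defined from parameters (r, σ) as above and L = n_r. Then G_N is lower triangular and banded: its (i,j) block equals (C(r+i-j-1, r-1) - Σ_{l=1}^{i-j} C(r+i-j-l-1, r-1) h_l)·P_{W_i}···P_{W_{j+1}} for 0 < i-j < K := n_r - r + 1, the identity for i = j, and zero otherwise. -/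
noncomputable section

/-- The orthogonal projection onto `W`, as an endomorphism of the ambient space. -/
def projEnd {d : ℕ} (W : Submodule ℝ (EuclideanSpace ℝ (Fin d))) :
    Module.End ℝ (EuclideanSpace ℝ (Fin d)) :=
  W.subtype ∘ₗ (W.orthogonalProjectionOnto).toLinearMap

/-- The composition `P_{W_i} P_{W_{i-1}} ⋯ P_{W_{j+1}}` (equal to `1` when `i ≤ j`). -/
def projChain {d : ℕ} (W : ℕ → Submodule ℝ (EuclideanSpace ℝ (Fin d))) (i j : ℕ) :
    Module.End ℝ (EuclideanSpace ℝ (Fin d)) :=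
  (((List.range (i - j)).map fun t => projEnd (W (i - t)))).prod

/-!
Let `B_m` be the lower triangular block matrix with blocks `C(i - j + m, m) P_{W_i} ⋯ P_{W_{j+1}}`
(`binomMatrix`). Pascal's rule gives `B_0 D = I` and `B_{m+1} D = B_m`, so `B_m = D^{-(m+1)}`. As
the projection chains compose, the `(i, j)` block of `B_{r-1}(I - H)` is `P_{W_i} ⋯ P_{W_{j+1}}`
times `C(n + r - 1, r - 1) - ∑_{l ≤ n} C(n + r - 1 - l, r - 1) h_l`, where `n = i - j`. For
`n ≥ K` this coefficient vanishes: `x ↦ (r - 1)! C(n + r - 1 - x, r - 1)` agrees on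
`0 ≤ x ≤ n + r - 1` with a polynomial of degree `r - 1`, the nodes `n_j` lie in that range, and the
`d_j` are exactly the weights of Lagrange interpolation at `0` from these `r` nodes.
-/

open Finset Polynomial

theorem Lagrange.eval_zero_eq_sum {F ι : Type*} [Field F] [DecidableEq ι] {s : Finset ι}
    {v : ι → F} (hv : Set.InjOn v s) {p : F[X]} (hp : p.degree < s.card) :
    p.eval 0 = ∑ j ∈ s, p.eval (v j) * ∏ i ∈ s.erase j, v i / (v i - v j) := by
  conv_lhs => rw [Lagrange.eq_interpolate hv hp]
  rw [Lagrange.interpolate_apply, eval_finsetSum]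
  refine sum_congr rfl fun j _ => ?_
  rw [eval_mul, eval_C, Lagrange.basis, eval_prod]
  congr 1
  refine prod_congr rfl fun i _ => ?_
  rw [Lagrange.basisDivisor, eval_mul, eval_C, eval_sub, eval_X, eval_C, ← neg_sub (v i), inv_neg]
  ring

section Binomial

variable {K : Type*} [Field K]

theorem natDegree_descPochhammer_comp_C_sub_X (m : ℕ) (a : K) :
    ((descPochhammer K m).comp (C a - X)).natDegree = m := by
  rw [natDegree_comp, descPochhammer_natDegree, ← neg_sub, natDegree_neg, natDegree_X_sub_C,
    mul_one]

theorem eval_descPochhammer_comp_C_sub_X (m k x : ℕ) (hx : x ≤ k) :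
    ((descPochhammer K m).comp (C (k : K) - X)).eval (x : K) = m.factorial * (k - x).choose m := by
  rw [eval_comp, eval_sub, eval_C, eval_X, ← Nat.cast_sub hx,
    descPochhammer_eval_eq_descFactorial, Nat.descFactorial_eq_factorial_mul_choose,
    Nat.cast_mul]

theorem choose_add_eq_sum_choose_mul_prod [CharZero K] (s : Finset ℕ) (x : ℕ → ℕ)
    (hx : Set.InjOn x s) {m n : ℕ} (hm : m < s.card) (hxn : ∀ j ∈ s, x j ≤ n + m) :
    ((n + m).choose m : K) =
      ∑ j ∈ s, ((n + m - x j).choose m : K) *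
        ∏ i ∈ s.erase j, (x i : K) / ((x i : K) - (x j : K)) := by
  have hinj : Set.InjOn (fun j => (x j : K)) s := fun a ha b hb hab =>
    hx ha hb (Nat.cast_injective hab)
  have hdeg : ((descPochhammer K m).comp (C ((n + m : ℕ) : K) - X)).degree < s.card :=
    degree_le_natDegree.trans_lt <| by
      rw [natDegree_descPochhammer_comp_C_sub_X]; exact_mod_cast hm
  have key := Lagrange.eval_zero_eq_sum hinj hdeg
  rw [← Nat.cast_zero, eval_descPochhammer_comp_C_sub_X m _ 0 (Nat.zero_le _),
    sum_congr rfl fun j hj => by rw [eval_descPochhammer_comp_C_sub_X m _ (x j) (hxn j hj)],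
    Nat.sub_zero] at key
  simp_rw [mul_assoc, ← mul_sum] at key
  exact mul_left_cancel₀ (Nat.cast_ne_zero.2 m.factorial_ne_zero) key

theorem sum_Icc_choose_mul_sum_ite (s : Finset ℕ) (x : ℕ → ℕ) (w : ℕ → K) {m n : ℕ}
    (hx : ∀ j ∈ s, 1 ≤ x j ∧ x j ≤ n + m) :
    ∑ l ∈ Icc 1 n, ((n + m - l).choose m : K) * ∑ j ∈ s, (if l = x j then w j else 0) =
      ∑ j ∈ s, ((n + m - x j).choose m : K) * w j := by
  simp_rw [mul_sum, mul_ite, mul_zero]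
  rw [sum_comm]
  refine sum_congr rfl fun j hj => ?_
  rw [sum_ite_eq']
  split_ifs with hmem
  · rfl
  · rw [Nat.choose_eq_zero_of_lt (by rw [mem_Icc] at hmem; have := hx j hj; omega),
      Nat.cast_zero, zero_mul]

theorem choose_add_eq_sum_Icc_choose_mul [CharZero K] (x : ℕ → ℕ)
    (hx : StrictMonoOn x (Set.Ici 1)) (hx1 : ∀ j, 1 ≤ x j) {r n : ℕ} (hr : 1 ≤ r)
    (hn : x r - r + 1 ≤ n) (w h : ℕ → K)
    (hw : ∀ j, w j = ∏ i ∈ (Icc 1 r).erase j, (x i : K) / ((x i : K) - (x j : K)))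
    (hh : ∀ l, h l = ∑ j ∈ Icc 1 r, if l = x j then w j else 0) :
    ((n + (r - 1)).choose (r - 1) : K) =
      ∑ l ∈ Icc 1 n, ((n + (r - 1) - l).choose (r - 1) : K) * h l := by
  have hsub : (Icc 1 r : Set ℕ) ⊆ Set.Ici 1 := fun j hj => (mem_Icc.1 (mem_coe.1 hj)).1
  have hbound : ∀ j ∈ Icc 1 r, 1 ≤ x j ∧ x j ≤ n + (r - 1) := fun j hj => by
    have := hx.monotoneOn (hsub hj) (hsub (right_mem_Icc.2 hr)) (mem_Icc.1 hj).2
    exact ⟨hx1 j, by omega⟩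
  simp_rw [hh]
  rw [sum_Icc_choose_mul_sum_ite _ _ _ hbound]
  simp_rw [hw]
  exact choose_add_eq_sum_choose_mul_prod _ _ (hx.injOn.mono hsub) (by rw [Nat.card_Icc]; omega)
    fun j hj => (hbound j hj).2

end Binomial

theorem strictMonoOn_mul_sub_one_sq_add_one {σ : ℕ} (hσ : 0 < σ) :
    StrictMonoOn (fun j : ℕ => σ * (j - 1) ^ 2 + 1) (Set.Ici 1) := by
  intro a ha b hb hab
  rw [Set.mem_Ici] at ha hb
  have hsq : (a - 1) ^ 2 < (b - 1) ^ 2 := Nat.pow_lt_pow_left (by omega) two_ne_zero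
  exact Nat.add_lt_add_right (Nat.mul_lt_mul_of_pos_left hsq hσ) 1

section projChain

variable {d : ℕ} (W : ℕ → Submodule ℝ (EuclideanSpace ℝ (Fin d)))

theorem projChain_of_le {i j : ℕ} (h : i ≤ j) : projChain W i j = 1 := by
  simp [projChain, Nat.sub_eq_zero_of_le h]

theorem projChain_eq_mul_projEnd {i j : ℕ} (hij : j < i) :
    projChain W i j = projChain W i (j + 1) * projEnd (W (j + 1)) := by
  rw [projChain, show i - j = i - (j + 1) + 1 by omega, List.range_succ, List.map_append,
    List.prod_append, List.map_singleton, List.prod_singleton,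
    show i - (i - (j + 1)) = j + 1 by omega, projChain]

theorem projChain_mul_projChain {i k j : ℕ} (hjk : j ≤ k) (hki : k ≤ i) :
    projChain W i k * projChain W k j = projChain W i j := by
  rw [projChain, projChain, projChain, show i - j = i - k + (k - j) by omega, List.range_add,
    List.map_append, List.prod_append, List.map_map]
  congr 2
  exact List.map_congr_left fun t ht => by
    rw [Function.comp_apply, show i - (i - k + t) = k - t by rw [List.mem_range] at ht; omega]

end projChain

section BlockMatrices

variable {d : ℕ} (W : ℕ → Submodule ℝ (EuclideanSpace ℝ (Fin d)))

def diffMatrix (N : ℕ) : Matrix (Fin N) (Fin N) (Module.End ℝ (EuclideanSpace ℝ (Fin d))) :=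
  Matrix.of fun i j => if i = j then 1 else if (i : ℕ) = j + 1 then -projEnd (W i) else 0

def binomMatrix (N m : ℕ) : Matrix (Fin N) (Fin N) (Module.End ℝ (EuclideanSpace ℝ (Fin d))) :=
  Matrix.of fun i j => if (j : ℕ) ≤ i then ((i - j + m : ℕ).choose m : ℝ) • projChain W i j else 0

def convMatrix (N : ℕ) (h : ℕ → ℝ) :
    Matrix (Fin N) (Fin N) (Module.End ℝ (EuclideanSpace ℝ (Fin d))) :=
  Matrix.of fun i j => if (j : ℕ) < i then h (i - j) • projChain W i j else 0

variable {N : ℕ}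

theorem mul_diffMatrix_apply (A : Matrix (Fin N) (Fin N) (Module.End ℝ (EuclideanSpace ℝ (Fin d))))
    (i j : Fin N) :
    (A * diffMatrix W N) i j = A i j -
      if h : (j : ℕ) + 1 < N then A i ⟨j + 1, h⟩ * projEnd (W (j + 1)) else 0 := by
  have hentry : ∀ k, A i k * diffMatrix W N k j =
      (if k = j then A i k else 0) - if (k : ℕ) = j + 1 then A i k * projEnd (W k) else 0 := by
    intro k
    simp only [diffMatrix, Matrix.of_apply]
    split_ifs <;> simp_all
  rw [Matrix.mul_apply, sum_congr rfl fun k _ => hentry k, sum_sub_distrib, sum_ite_eq',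
    if_pos (mem_univ _)]
  congr 1
  split_ifs with h
  · rw [Fintype.sum_eq_single ⟨j + 1, h⟩ fun k hk => if_neg fun hk' => hk (Fin.ext hk'),
      if_pos rfl]
  · exact sum_eq_zero fun k _ => if_neg (by omega)

theorem binomMatrix_mul_diffMatrix_apply (m : ℕ) (i j : Fin N) :
    (binomMatrix W N m * diffMatrix W N) i j = binomMatrix W N m i j -
      if (j : ℕ) < i then ((i - (j + 1) + m : ℕ).choose m : ℝ) • projChain W i j else 0 := by
  rw [mul_diffMatrix_apply]
  congr 1
  split_ifs with hN hji hji
  · simp only [binomMatrix, Matrix.of_apply, if_pos (show (j : ℕ) + 1 ≤ i from hji),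
      smul_mul_assoc, ← projChain_eq_mul_projEnd W hji]
  · simp only [binomMatrix, Matrix.of_apply, if_neg (show ¬ (j : ℕ) + 1 ≤ i by omega), zero_mul]
  · exact absurd hN (by omega)
  · rfl

theorem binomMatrix_zero_mul_diffMatrix : binomMatrix W N 0 * diffMatrix W N = 1 := by
  ext1 i j
  rw [binomMatrix_mul_diffMatrix_apply, Matrix.one_apply]
  rcases lt_trichotomy j i with hji | rfl | hij
  · simp [binomMatrix, hji.le, hji, hji.ne']
  · simp [binomMatrix, projChain_of_le]
  · simp [binomMatrix, hij.not_ge, hij.not_gt, hij.ne]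

theorem binomMatrix_succ_mul_diffMatrix (m : ℕ) :
    binomMatrix W N (m + 1) * diffMatrix W N = binomMatrix W N m := by
  ext1 i j
  rw [binomMatrix_mul_diffMatrix_apply]
  rcases lt_trichotomy j i with hji | rfl | hij
  · have hji' : (j : ℕ) < i := hji
    simp only [binomMatrix, Matrix.of_apply, if_pos hji'.le, if_pos hji', ← sub_smul]
    obtain ⟨k, hk⟩ : ∃ k, (i : ℕ) - j = k + 1 := ⟨i - (j + 1), by omega⟩
    rw [hk, show (i : ℕ) - (j + 1) = k by omega, show k + 1 + (m + 1) = k + m + 1 + 1 by omega,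
      Nat.choose_succ_succ', show k + (m + 1) = k + m + 1 by omega,
      show k + 1 + m = k + m + 1 by omega]
    push_cast
    rw [add_sub_cancel_right]
  · simp [binomMatrix]
  · simp [binomMatrix, hij.not_ge, hij.not_gt]

theorem binomMatrix_mul_diffMatrix_pow (m : ℕ) :
    binomMatrix W N m * diffMatrix W N ^ (m + 1) = 1 := by
  induction m with
  | zero => rw [zero_add, pow_one, binomMatrix_zero_mul_diffMatrix]
  | succ m ih => rw [pow_succ', ← mul_assoc, binomMatrix_succ_mul_diffMatrix, ih]

theorem binomMatrix_mul_convMatrix_apply (m : ℕ) (h : ℕ → ℝ) (i j : Fin N) :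
    (binomMatrix W N m * convMatrix W N h) i j =
      (∑ l ∈ Icc 1 ((i : ℕ) - j), ((i - j + m - l).choose m : ℝ) * h l) • projChain W i j := by
  have hterm : ∀ k : Fin N, binomMatrix W N m i k * convMatrix W N h k j =
      if (k : ℕ) ∈ Ioc (j : ℕ) i then
        (((i - k + m).choose m : ℝ) * h (k - j)) • projChain W i j else 0 := by
    intro k
    simp only [binomMatrix, convMatrix, Matrix.of_apply, mem_Ioc]
    by_cases hjk : (j : ℕ) < k
    · by_cases hki : (k : ℕ) ≤ i
      · rw [if_pos hki, if_pos hjk, if_pos ⟨hjk, hki⟩, smul_mul_smul_comm,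
          projChain_mul_projChain W hjk.le hki]
      · rw [if_neg hki, zero_mul, if_neg fun hk => hki hk.2]
    · rw [if_neg hjk, mul_zero, if_neg fun hk => hjk hk.1]
  have hIoc : Ioc (j : ℕ) i ⊆ range N := fun k hk => by
    rw [mem_Ioc] at hk; rw [mem_range]; omega
  rw [Matrix.mul_apply, sum_congr rfl fun k _ => hterm k,
    Fin.sum_univ_eq_sum_range (fun k => if k ∈ Ioc (j : ℕ) i then
      (((i - k + m).choose m : ℝ) * h (k - j)) • projChain W i j else 0),
    sum_ite_mem, inter_eq_right.2 hIoc, ← sum_smul]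
  congr 1
  refine sum_nbij' (· - (j : ℕ)) (· + j) ?_ ?_ ?_ ?_ fun k hk => ?_
  any_goals (intro k hk; simp only [mem_Ioc, mem_Icc] at hk ⊢; omega)
  rw [mem_Ioc] at hk
  rw [show (i : ℕ) - k + m = i - j + m - (k - j) by omega]

theorem convMatrix_eq_of_forall_lt {h : ℕ → ℝ} {L : ℕ} (hL : ∀ l, L < l → h l = 0) :
    convMatrix W N h = Matrix.of fun i j : Fin N =>
      if (j : ℕ) < i ∧ (i : ℕ) - j ≤ L then h (i - j) • projChain W i j else 0 := by
  ext1 i j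
  rw [convMatrix, Matrix.of_apply, Matrix.of_apply]
  by_cases hji : (j : ℕ) < i
  · by_cases hband : (i : ℕ) - j ≤ L
    · rw [if_pos hji, if_pos ⟨hji, hband⟩]
    · rw [if_pos hji, if_neg fun hc => hband hc.2, hL _ (not_le.1 hband), zero_smul]
  · rw [if_neg hji, if_neg fun hc => hji hc.1]

theorem binomMatrix_mul_one_sub_convMatrix_apply (m : ℕ) (h : ℕ → ℝ) (i j : Fin N) :
    (binomMatrix W N m * (1 - convMatrix W N h)) i j =
      if (j : ℕ) ≤ i then
        (((i - j + m).choose m : ℝ) -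
          ∑ l ∈ Icc 1 ((i : ℕ) - j), ((i - j + m - l).choose m : ℝ) * h l) • projChain W i j
      else 0 := by
  rw [Matrix.mul_sub, Matrix.mul_one, Matrix.sub_apply, binomMatrix_mul_convMatrix_apply]
  simp only [binomMatrix, Matrix.of_apply]
  split_ifs with hji
  · rw [sub_smul]
  · rw [Icc_eq_empty (by omega), sum_empty, zero_smul, sub_zero]

theorem eq_binomMatrix_of_diffMatrix_pow_mul_eq_one {r : ℕ} (hr : 1 ≤ r)
    {S : Matrix (Fin N) (Fin N) (Module.End ℝ (EuclideanSpace ℝ (Fin d)))}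
    (hS : diffMatrix W N ^ r * S = 1) : S = binomMatrix W N (r - 1) := by
  refine (left_inv_eq_right_inv ?_ hS).symm
  rw [← binomMatrix_mul_diffMatrix_pow W (r - 1), Nat.sub_add_cancel hr]

end BlockMatrices

theorem stmt_14_general (d N r σ : ℕ) (hr : 1 ≤ r) (hσ : 1 ≤ σ)
    (nn : ℕ → ℕ) (hnn : ∀ j, nn j = σ * (j - 1) ^ 2 + 1)
    (dd : ℕ → ℝ)
    (hdd : ∀ j, dd j = ∏ i ∈ (Finset.Icc 1 r).erase j, (nn i : ℝ) / ((nn i : ℝ) - (nn j : ℝ)))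
    (h : ℕ → ℝ)
    (hh : ∀ l, h l = ∑ j ∈ Finset.Icc 1 r, if l = nn j then dd j else 0)
    (W : ℕ → Submodule ℝ (EuclideanSpace ℝ (Fin d)))
    (D S Hmat : Matrix (Fin N) (Fin N) (Module.End ℝ (EuclideanSpace ℝ (Fin d))))
    (hD : ∀ i j : Fin N, D i j =
      if i = j then 1 else if (i : ℕ) = (j : ℕ) + 1 then -projEnd (W (i : ℕ)) else 0)
    (hS1 : D ^ r * S = 1)
    (hHmat : ∀ n k : Fin N, Hmat n k =
      if (k : ℕ) < (n : ℕ) ∧ (n : ℕ) - (k : ℕ) ≤ nn r then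
        h ((n : ℕ) - (k : ℕ)) • projChain W (n : ℕ) (k : ℕ) else 0) :
    ∀ i j : Fin N, (S * (1 - Hmat)) i j =
      if i = j then 1
      else if (j : ℕ) < (i : ℕ) ∧ (i : ℕ) - (j : ℕ) < nn r - r + 1 then
        ((Nat.choose (r + (i : ℕ) - (j : ℕ) - 1) (r - 1) : ℝ) -
          ∑ l ∈ Finset.Icc 1 ((i : ℕ) - (j : ℕ)),
            (Nat.choose (r + (i : ℕ) - (j : ℕ) - l - 1) (r - 1) : ℝ) * h l) •
          projChain W (i : ℕ) (j : ℕ)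
      else 0 := by
  have hmono : StrictMonoOn nn (Set.Ici 1) := by
    rw [funext hnn]; exact strictMonoOn_mul_sub_one_sq_add_one hσ
  have hnn1 : ∀ j, 1 ≤ nn j := fun j => hnn j ▸ Nat.le_add_left 1 _
  have hsupp : ∀ l, nn r < l → h l = 0 := fun l hl => by
    refine (hh l).trans (sum_eq_zero fun j hj => if_neg fun hlj => ?_)
    have := hmono.monotoneOn (Set.mem_Ici.2 (mem_Icc.1 hj).1) (Set.mem_Ici.2 hr) (mem_Icc.1 hj).2
    omega
  have hH : Hmat = convMatrix W N h := by
    rw [convMatrix_eq_of_forall_lt W hsupp]; exact Matrix.ext hHmat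
  have hD' : D = diffMatrix W N := Matrix.ext hD
  have hS : S = binomMatrix W N (r - 1) :=
    eq_binomMatrix_of_diffMatrix_pow_mul_eq_one W hr (hD' ▸ hS1)
  intro i j
  rw [hS, hH, binomMatrix_mul_one_sub_convMatrix_apply]
  rcases lt_trichotomy j i with hji | rfl | hij
  · have hji' : (j : ℕ) < i := hji
    rw [if_pos hji'.le, if_neg hji.ne']
    simp only [show ∀ l, r + (i : ℕ) - j - l - 1 = i - j + (r - 1) - l from fun l => by omega,
      show r + (i : ℕ) - j - 1 = i - j + (r - 1) by omega]
    split_ifs with hband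
    · rfl
    · rw [← choose_add_eq_sum_Icc_choose_mul nn hmono hnn1 hr (by omega) dd h hdd hh, sub_self,
        zero_smul]
  · simp [projChain_of_le]
  · simp [hij.ne, hij.not_ge, hij.not_gt]

/-- `G_N = D_N^{-r}(I - H_N)` is lower triangular and banded, with blocks
`(C(r+i-j-1,r-1) - Σ_{l=1}^{i-j} C(r+i-j-l-1,r-1)h_l)·P_{W_i}⋯P_{W_{j+1}}` for
`0 < i-j < K = n_r - r + 1`, the identity on the diagonal, and `0` otherwise. -/
theorem stmt_14 (d N r σ : ℕ) (hr : 1 ≤ r) (hσ : 1 ≤ σ) (hN : 1 ≤ N)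
    (nn : ℕ → ℕ) (hnn : ∀ j, nn j = σ * (j - 1) ^ 2 + 1)
    (dd : ℕ → ℝ)
    (hdd : ∀ j, dd j = ∏ i ∈ (Finset.Icc 1 r).erase j, (nn i : ℝ) / ((nn i : ℝ) - (nn j : ℝ)))
    (h : ℕ → ℝ)
    (hh : ∀ l, h l = ∑ j ∈ Finset.Icc 1 r, if l = nn j then dd j else 0)
    (W : ℕ → Submodule ℝ (EuclideanSpace ℝ (Fin d)))
    (D S Hmat : Matrix (Fin N) (Fin N) (Module.End ℝ (EuclideanSpace ℝ (Fin d))))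
    (hD : ∀ i j : Fin N, D i j =
      if i = j then 1 else if (i : ℕ) = (j : ℕ) + 1 then -projEnd (W (i : ℕ)) else 0)
    (hS1 : D ^ r * S = 1) (hS2 : S * D ^ r = 1)
    (hHmat : ∀ n k : Fin N, Hmat n k =
      if (k : ℕ) < (n : ℕ) ∧ (n : ℕ) - (k : ℕ) ≤ nn r then
        h ((n : ℕ) - (k : ℕ)) • projChain W (n : ℕ) (k : ℕ) else 0) :
    ∀ i j : Fin N, (S * (1 - Hmat)) i j =
      if i = j then 1
      else if (j : ℕ) < (i : ℕ) ∧ (i : ℕ) - (j : ℕ) < nn r - r + 1 then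
        ((Nat.choose (r + (i : ℕ) - (j : ℕ) - 1) (r - 1) : ℝ) -
          ∑ l ∈ Finset.Icc 1 ((i : ℕ) - (j : ℕ)),
            (Nat.choose (r + (i : ℕ) - (j : ℕ) - l - 1) (r - 1) : ℝ) * h l) •
          projChain W (i : ℕ) (j : ℕ)
      else 0 :=
  stmt_14_general d N r σ hr hσ nn hnn dd hdd h hh W D S Hmat hD hS1 hHmat
end
end
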